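/- arXiv:2503.01132 — 2 statements merged into one kernel-verified Lean document; each statement's English description precedes it below -/
import Mathlib

section
/- For every m ∈ (0,1), the ratio μ = E(m)/K(m) of complete elliptic integrals satisfies μ < 1 and 3(μ − 1)² ≤ 2 + m − 2(1+m)·μ ≤ (9/2)·(μ − 1)². Equivalently, the kurtosis κ(m) = (2 + m − 2(1+m)μ)/(3(μ−1)²) of the genus one defocusing NLS soliton condensate satisfies 1 ≤ κ(m) ≤ 3/2. -/
open Real

/-- Complete elliptic integral of the second kind with parameter `m`. -/
noncomputable def ellipticE (m : ℝ) : ℝ :=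
  ∫ y in (0:ℝ)..(π / 2), Real.sqrt (1 - m * Real.sin y ^ 2)

/-- Complete elliptic integral of the first kind with parameter `m`. -/
noncomputable def ellipticK (m : ℝ) : ℝ :=
  ∫ y in (0:ℝ)..(π / 2), 1 / Real.sqrt (1 - m * Real.sin y ^ 2)

/-! With `w = 1 - m sin² y`, differentiating `m sin y cos y √w` gives
`3 ∫ w^{3/2} = 2(2-m) E - (1-m) K`, and Cauchy–Schwarz for the weight `1/√w` gives
`E² ≤ (∫ w^{3/2}) K`. Together they say `3μ² + (2m-4)μ + 1 - m ≤ 0`, which is the lower bound and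
forces `μ < 1`, since for `μ ≥ 1` the left side is at least `m > 0`.

The upper bound says `9μ² + (4m-14)μ + 5 - 2m ≥ 0`. The discriminant of this quadratic is
`8(2m-1)(m-2)`, nonpositive for `m ≥ 1/2`. For `m < 1/2` the ratio `μ` has to lie above the larger
root, which agrees with `μ` up to order `m²` at `m = 0`; integrating quartic Taylor bounds of
`1/√(1-x)` and `√(1-x)` termwise gives a lower bound for `μ` that still clears that root. -/

open intervalIntegral

theorem integral_sin_pow_add_two_zero_pi_div_two (n : ℕ) :
    ∫ y in (0:ℝ)..π / 2, sin y ^ (n + 2) = (n + 1) / (n + 2) * ∫ y in (0:ℝ)..π / 2, sin y ^ n := by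
  simp [integral_sin_pow]

theorem integral_quartic_mul_sin_sq (m a b c d e : ℝ) :
    ∫ y in (0:ℝ)..π / 2, (a + b * (m * sin y ^ 2) + c * (m * sin y ^ 2) ^ 2
        + d * (m * sin y ^ 2) ^ 3 + e * (m * sin y ^ 2) ^ 4) =
      π / 2 * (a + b * m / 2 + 3 * c * m ^ 2 / 8 + 5 * d * m ^ 3 / 16 + 35 * e * m ^ 4 / 128) := by
  have w2 := integral_sin_pow_add_two_zero_pi_div_two 0
  have w4 := integral_sin_pow_add_two_zero_pi_div_two 2
  have w6 := integral_sin_pow_add_two_zero_pi_div_two 4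
  have w8 := integral_sin_pow_add_two_zero_pi_div_two 6
  norm_num at w2 w4 w6 w8
  rw [integral_add, integral_add, integral_add, integral_add]
  · simp only [mul_pow, ← pow_mul, ← mul_assoc, integral_const_mul, integral_const]
    norm_num [w2, w4, w6, w8]
    ring
  all_goals exact Continuous.intervalIntegrable (by fun_prop) _ _

-- Quartic Taylor polynomials with the last coefficient doubled, which pays for the tail on
-- `[0, 1/2]`. In these and the polynomial inequalities below, the difference of the two sides is a
-- nonnegative combination of the products `x^i (1 - 2x)^j`.
theorem one_div_sqrt_one_sub_le {x : ℝ} (hx₀ : 0 ≤ x) (hx : 2 * x ≤ 1) :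
    1 / √(1 - x) ≤ 1 + x / 2 + 3 * x ^ 2 / 8 + 5 * x ^ 3 / 16 + 35 * x ^ 4 / 64 := by
  have hy : 0 ≤ 1 - 2 * x := by linarith
  rw [one_div, ← sqrt_inv, sqrt_le_left (by positivity), inv_le_iff_one_le_mul₀ (by linarith)]
  linarith [mul_nonneg (pow_nonneg hx₀ 4) (pow_nonneg hy 5),
    mul_nonneg (pow_nonneg hx₀ 5) (pow_nonneg hy 4),
    mul_nonneg (pow_nonneg hx₀ 6) (pow_nonneg hy 3),
    mul_nonneg (pow_nonneg hx₀ 7) (pow_nonneg hy 2), mul_nonneg (pow_nonneg hx₀ 8) hy,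
    pow_nonneg hx₀ 9]

theorem le_sqrt_one_sub {x : ℝ} (hx₀ : 0 ≤ x) (hx : 2 * x ≤ 1) :
    1 - x / 2 - x ^ 2 / 8 - x ^ 3 / 16 - 5 * x ^ 4 / 64 ≤ √(1 - x) := by
  have hy : 0 ≤ 1 - 2 * x := by linarith
  apply le_sqrt_of_sq_le
  linarith [mul_nonneg (pow_nonneg hx₀ 4) (pow_nonneg hy 4),
    mul_nonneg (pow_nonneg hx₀ 5) (pow_nonneg hy 3),
    mul_nonneg (pow_nonneg hx₀ 6) (pow_nonneg hy 2), mul_nonneg (pow_nonneg hx₀ 7) hy,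
    pow_nonneg hx₀ 8]

-- `(2/π) ∫₀^{π/2} p(m sin² y) dy` for the two polynomials `p` above.
noncomputable def ellipticKMajorant (m : ℝ) : ℝ :=
  1 + m / 4 + 9 * m ^ 2 / 64 + 25 * m ^ 3 / 256 + 1225 * m ^ 4 / 8192

noncomputable def ellipticEMinorant (m : ℝ) : ℝ :=
  1 - m / 4 - 3 * m ^ 2 / 64 - 5 * m ^ 3 / 256 - 175 * m ^ 4 / 8192

theorem seven_sub_two_mul_mul_ellipticKMajorant_le {m : ℝ} (hm₀ : 0 ≤ m) (hm : 2 * m ≤ 1) :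
    (7 - 2 * m) * ellipticKMajorant m ≤ 9 * ellipticEMinorant m := by
  unfold ellipticKMajorant ellipticEMinorant
  have hy : 0 ≤ 1 - 2 * m := by linarith
  linarith [pow_nonneg hy 5, mul_nonneg hm₀ (pow_nonneg hy 4),
    mul_nonneg (pow_nonneg hm₀ 2) (pow_nonneg hy 3),
    mul_nonneg (pow_nonneg hm₀ 3) (pow_nonneg hy 2), mul_nonneg (pow_nonneg hm₀ 4) hy,
    pow_nonneg hm₀ 5]

theorem kurtosis_quadratic_ellipticEMinorant_ellipticKMajorant_nonneg {m : ℝ} (hm₀ : 0 ≤ m)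
    (hm : 2 * m ≤ 1) :
    0 ≤ 9 * ellipticEMinorant m ^ 2 + (4 * m - 14) * ellipticEMinorant m * ellipticKMajorant m
      + (5 - 2 * m) * ellipticKMajorant m ^ 2 := by
  unfold ellipticKMajorant ellipticEMinorant
  have hy : 0 ≤ 1 - 2 * m := by linarith
  linarith [mul_nonneg (pow_nonneg hm₀ 3) (pow_nonneg hy 7),
    mul_nonneg (pow_nonneg hm₀ 4) (pow_nonneg hy 6),
    mul_nonneg (pow_nonneg hm₀ 5) (pow_nonneg hy 5),
    mul_nonneg (pow_nonneg hm₀ 6) (pow_nonneg hy 4),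
    mul_nonneg (pow_nonneg hm₀ 7) (pow_nonneg hy 3),
    mul_nonneg (pow_nonneg hm₀ 8) (pow_nonneg hy 2), mul_nonneg (pow_nonneg hm₀ 9) hy,
    pow_nonneg hm₀ 10]

theorem sq_integral_mul_le_integral_sq_mul_mul_integral {f h : ℝ → ℝ} {a b : ℝ} (hab : a ≤ b)
    (hf : Continuous f) (hh : Continuous h) (h₀ : ∀ x ∈ Set.Icc a b, 0 ≤ h x) :
    (∫ x in a..b, f x * h x) ^ 2 ≤ (∫ x in a..b, f x ^ 2 * h x) * ∫ x in a..b, h x := by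
  have hquad : ∀ t : ℝ, 0 ≤ (∫ x in a..b, h x) * (t * t) + (-2 * ∫ x in a..b, f x * h x) * t
      + ∫ x in a..b, f x ^ 2 * h x := by
    intro t
    have hnonneg : 0 ≤ ∫ x in a..b, (f x - t) ^ 2 * h x :=
      integral_nonneg hab fun x hx => mul_nonneg (sq_nonneg _) (h₀ x hx)
    have hexpand : ∫ x in a..b, (f x - t) ^ 2 * h x
        = ∫ x in a..b, (f x ^ 2 * h x - 2 * t * (f x * h x) + t ^ 2 * h x) := by
      congr 1; ext x; ring
    rw [hexpand, integral_add, integral_sub, integral_const_mul, integral_const_mul] at hnonneg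
    · linarith
    all_goals exact Continuous.intervalIntegrable (by fun_prop) _ _
  have := discrim_le_zero hquad
  rw [discrim] at this
  linarith

section

variable {m : ℝ}

theorem one_sub_mul_sin_sq_pos (hm : m < 1) (y : ℝ) : 0 < 1 - m * sin y ^ 2 := by
  rcases le_total m 0 with h | h
  · nlinarith [sq_nonneg (sin y)]
  · nlinarith [sin_sq_le_one y]

theorem sqrt_one_sub_mul_sin_sq_pos (hm : m < 1) (y : ℝ) : 0 < √(1 - m * sin y ^ 2) :=
  sqrt_pos.2 (one_sub_mul_sin_sq_pos hm y)

theorem continuous_one_div_sqrt_one_sub_mul_sin_sq (hm : m < 1) :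
    Continuous fun y => 1 / √(1 - m * sin y ^ 2) :=
  continuous_const.div (by fun_prop) fun y => (sqrt_one_sub_mul_sin_sq_pos hm y).ne'

theorem ellipticK_pos (hm : m < 1) : 0 < ellipticK m :=
  intervalIntegral_pos_of_pos_on
    ((continuous_one_div_sqrt_one_sub_mul_sin_sq hm).intervalIntegrable _ _)
    (fun y _ => one_div_pos.2 (sqrt_one_sub_mul_sin_sq_pos hm y)) (by positivity)

theorem hasDerivAt_mul_sin_mul_cos_mul_sqrt (m y : ℝ) (hy : 0 < 1 - m * sin y ^ 2) :
    HasDerivAt (fun t => m * (sin t * cos t * √(1 - m * sin t ^ 2)))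
      (3 * √(1 - m * sin y ^ 2) ^ 3 - 2 * (2 - m) * √(1 - m * sin y ^ 2)
        + (1 - m) * (1 / √(1 - m * sin y ^ 2))) y := by
  have hw : HasDerivAt (fun t => 1 - m * sin t ^ 2) (-(m * (2 * sin y * cos y))) y := by
    simpa using ((hasDerivAt_sin y).pow 2).const_mul m |>.const_sub 1
  have hF := (((hasDerivAt_sin y).fun_mul (hasDerivAt_cos y)).fun_mul (hw.sqrt hy.ne')).const_mul m
  refine hF.congr_deriv ?_
  have hs2 := sq_sqrt hy.le
  field_simp
  set s := √(1 - m * sin y ^ 2)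
  linear_combination (4 - m - 2 * m * sin y ^ 2 - 3 * (s ^ 2 + 1 - m * sin y ^ 2)) * hs2
    + (m * s ^ 2 - m ^ 2 * sin y ^ 2) * sin_sq_add_cos_sq y

theorem three_mul_integral_sqrt_pow_three (hm : m < 1) :
    3 * ∫ y in (0:ℝ)..π / 2, √(1 - m * sin y ^ 2) ^ 3
      = 2 * (2 - m) * ellipticE m - (1 - m) * ellipticK m := by
  have hK := continuous_one_div_sqrt_one_sub_mul_sin_sq hm
  have hFTC := integral_eq_sub_of_hasDerivAt (a := 0) (b := π / 2)
    (fun y _ => hasDerivAt_mul_sin_mul_cos_mul_sqrt m y (one_sub_mul_sin_sq_pos hm y))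
    (Continuous.intervalIntegrable (by fun_prop) _ _)
  rw [integral_add, integral_sub, integral_const_mul, integral_const_mul, integral_const_mul]
    at hFTC
  · simp only [cos_pi_div_two, sin_zero, mul_zero, zero_mul, sub_zero] at hFTC
    rw [ellipticE, ellipticK]
    linarith
  all_goals exact Continuous.intervalIntegrable (by fun_prop) _ _

theorem sq_ellipticE_le (hm : m < 1) :
    ellipticE m ^ 2 ≤ (∫ y in (0:ℝ)..π / 2, √(1 - m * sin y ^ 2) ^ 3) * ellipticK m := by
  have hCS := sq_integral_mul_le_integral_sq_mul_mul_integral (a := 0) (b := π / 2)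
    (f := fun y => √(1 - m * sin y ^ 2) ^ 2)
    (by positivity) (by fun_prop) (continuous_one_div_sqrt_one_sub_mul_sin_sq hm)
    fun y _ => (one_div_pos.2 (sqrt_one_sub_mul_sin_sq_pos hm y)).le
  have hs : ∀ y, √(1 - m * sin y ^ 2) ≠ 0 := fun y => (sqrt_one_sub_mul_sin_sq_pos hm y).ne'
  rwa [integral_congr fun y _ => show √(1 - m * sin y ^ 2) ^ 2 * (1 / √(1 - m * sin y ^ 2))
      = √(1 - m * sin y ^ 2) by field_simp [hs y],
    integral_congr fun y _ => show (√(1 - m * sin y ^ 2) ^ 2) ^ 2 * (1 / √(1 - m * sin y ^ 2))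
      = √(1 - m * sin y ^ 2) ^ 3 by field_simp [hs y]] at hCS

theorem kurtosis_lower_bound (hm : m < 1) :
    3 * (ellipticE m / ellipticK m - 1) ^ 2
      ≤ 2 + m - 2 * (1 + m) * (ellipticE m / ellipticK m) := by
  have hK := ellipticK_pos hm
  have hquad :
      3 * ellipticE m ^ 2 ≤ (2 * (2 - m) * ellipticE m - (1 - m) * ellipticK m) * ellipticK m := by
    rw [← three_mul_integral_sqrt_pow_three hm]
    linarith [sq_ellipticE_le hm]
  rw [← div_mul_cancel₀ (ellipticE m) hK.ne'] at hquad
  refine le_of_mul_le_mul_right ?_ (pow_pos hK 2)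
  linear_combination hquad

theorem ellipticK_le_mul_ellipticKMajorant (hm₀ : 0 ≤ m) (hm : 2 * m ≤ 1) :
    ellipticK m ≤ π / 2 * ellipticKMajorant m := calc
  ellipticK m ≤ ∫ y in (0:ℝ)..π / 2, (1 + 1 / 2 * (m * sin y ^ 2) + 3 / 8 * (m * sin y ^ 2) ^ 2
      + 5 / 16 * (m * sin y ^ 2) ^ 3 + 35 / 64 * (m * sin y ^ 2) ^ 4) := by
    refine integral_mono_on (by positivity)
      ((continuous_one_div_sqrt_one_sub_mul_sin_sq (by linarith)).intervalIntegrable _ _)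
      (Continuous.intervalIntegrable (by fun_prop) _ _) fun y _ => ?_
    have := one_div_sqrt_one_sub_le (x := m * sin y ^ 2) (by positivity)
      (by nlinarith [sin_sq_le_one y])
    linarith
  _ = π / 2 * ellipticKMajorant m := by
    rw [integral_quartic_mul_sin_sq, ellipticKMajorant]; ring

theorem mul_ellipticEMinorant_le_ellipticE (hm₀ : 0 ≤ m) (hm : 2 * m ≤ 1) :
    π / 2 * ellipticEMinorant m ≤ ellipticE m := calc
  π / 2 * ellipticEMinorant m = ∫ y in (0:ℝ)..π / 2, (1 + -1 / 2 * (m * sin y ^ 2)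
      + -1 / 8 * (m * sin y ^ 2) ^ 2 + -1 / 16 * (m * sin y ^ 2) ^ 3
      + -5 / 64 * (m * sin y ^ 2) ^ 4) := by
    rw [integral_quartic_mul_sin_sq, ellipticEMinorant]; ring
  _ ≤ ellipticE m := by
    refine integral_mono_on (by positivity) (Continuous.intervalIntegrable (by fun_prop) _ _)
      (Continuous.intervalIntegrable (by fun_prop) _ _) fun y _ => ?_
    have := le_sqrt_one_sub (x := m * sin y ^ 2) (by positivity) (by nlinarith [sin_sq_le_one y])
    linarith

theorem ellipticEMinorant_div_ellipticKMajorant_le (hm₀ : 0 ≤ m) (hm : 2 * m ≤ 1) :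
    ellipticEMinorant m / ellipticKMajorant m ≤ ellipticE m / ellipticK m := by
  have hπ : (0:ℝ) < π / 2 := by positivity
  rw [← mul_div_mul_left _ _ hπ.ne']
  exact div_le_div₀ (integral_nonneg hπ.le fun y _ => sqrt_nonneg _)
    (mul_ellipticEMinorant_le_ellipticE hm₀ hm) (ellipticK_pos (by linarith))
    (ellipticK_le_mul_ellipticKMajorant hm₀ hm)

end

-- `18 (9/2 (u-1)² - (2 + m - 2(1+m)u)) = (9u + 2m - 7)² + 2(2m-1)(2-m)`.
theorem quadratic_upper_of_half_le {m : ℝ} (u : ℝ) (h₁ : 1 ≤ 2 * m) (h₂ : m ≤ 2) :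
    2 + m - 2 * (1 + m) * u ≤ 9 / 2 * (u - 1) ^ 2 := by
  nlinarith [sq_nonneg (9 * u + 2 * m - 7), mul_nonneg (sub_nonneg.2 h₁) (sub_nonneg.2 h₂)]

-- The quadratic is increasing to the right of its vertex `(7 - 2m)/9`.
theorem quadratic_upper_of_root_le {m r u : ℝ} (hr : 7 - 2 * m ≤ 9 * r)
    (hq : 0 ≤ 9 * r ^ 2 + (4 * m - 14) * r + 5 - 2 * m) (hru : r ≤ u) :
    2 + m - 2 * (1 + m) * u ≤ 9 / 2 * (u - 1) ^ 2 := by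
  nlinarith [mul_nonneg (sub_nonneg.2 hru) (by linarith : 0 ≤ 9 * (u + r) + 4 * m - 14)]

theorem kurtosis_upper_bound_of_le_half {m : ℝ} (hm₀ : 0 ≤ m) (hm : 2 * m ≤ 1) :
    2 + m - 2 * (1 + m) * (ellipticE m / ellipticK m)
      ≤ 9 / 2 * (ellipticE m / ellipticK m - 1) ^ 2 := by
  have hlin := seven_sub_two_mul_mul_ellipticKMajorant_le hm₀ hm
  have hquad := kurtosis_quadratic_ellipticEMinorant_ellipticKMajorant_nonneg hm₀ hm
  have hP : 0 < ellipticKMajorant m := by unfold ellipticKMajorant; positivity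
  refine quadratic_upper_of_root_le ?_ ?_ (ellipticEMinorant_div_ellipticKMajorant_le hm₀ hm)
  · rwa [mul_div_assoc', le_div_iff₀ hP]
  · refine (div_nonneg hquad (sq_nonneg (ellipticKMajorant m))).trans_eq ?_
    field_simp
    ring

/-- For every `m ∈ (0,1)`, `μ = E(m)/K(m)` satisfies `μ < 1` and
`3(μ − 1)² ≤ 2 + m − 2(1+m)μ ≤ (9/2)(μ − 1)²`; equivalently the kurtosis
`κ(m) = (2 + m − 2(1+m)μ)/(3(μ−1)²)` satisfies `1 ≤ κ(m) ≤ 3/2`. -/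
theorem kurtosis_bounds (m : ℝ) (hm : m ∈ Set.Ioo (0:ℝ) 1) :
    ellipticE m / ellipticK m < 1 ∧
    3 * (ellipticE m / ellipticK m - 1) ^ 2
      ≤ 2 + m - 2 * (1 + m) * (ellipticE m / ellipticK m) ∧
    2 + m - 2 * (1 + m) * (ellipticE m / ellipticK m)
      ≤ (9 / 2) * (ellipticE m / ellipticK m - 1) ^ 2 := by
  obtain ⟨hm₀, hm₁⟩ := hm
  have hlower := kurtosis_lower_bound hm₁
  refine ⟨?_, hlower, ?_⟩
  · by_contra! h
    nlinarith [mul_nonneg hm₀.le (sub_nonneg.2 h)]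
  · rcases le_total (2 * m) 1 with h | h
    · exact kurtosis_upper_bound_of_le_half hm₀.le h
    · exact quadratic_upper_of_half_le _ h (by linarith)
end

section
/- For every z ∈ (−1,1), one has ∫_{−1}^{1} log( (√(1−z²)·√(1−w²) + 1 − z·w) / |z−w| ) dw = π·√(1−z²). -/
/-!
With `N(w) = √(1-z²)√(1-w²) + 1 - zw`, the function
`F(w) = (w - z) log N(w) + (z - w) log |z - w| - √(1-z²) arccos w`
is continuous on `[-1, 1]` and, away from `w = z`, has derivative `log (N(w) / |z - w|)`:
the derivatives of the two products contribute `log N(w) - log |z - w|` plus a rational remainder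
in `√(1-z²)` and `√(1-w²)`, which vanishes because their squares are `1 - z²` and `1 - w²`.
The fundamental theorem of calculus, with the single exceptional point `z`, gives
`F(1) - F(-1) = 0 - (-π√(1-z²))`.
-/

open Real MeasureTheory Set

noncomputable def kernelNumerator (z w : ℝ) : ℝ :=
  √(1 - z ^ 2) * √(1 - w ^ 2) + 1 - z * w

/-- `Real.log` is even, so `(z - w) * log (z - w)` is `(z - w) log |z - w|` on both sides of `z`. -/
noncomputable def kernelPrimitive (z w : ℝ) : ℝ :=
  (w - z) * log (kernelNumerator z w) + (z - w) * log (z - w) - √(1 - z ^ 2) * arccos w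

section

variable {z w : ℝ}

lemma kernelNumerator_pos (hz : z ∈ Ioo (-1) 1) (hw : w ∈ Icc (-1) 1) :
    0 < kernelNumerator z w := by
  have hzw : z * w < 1 :=
    calc z * w ≤ |z| * |w| := abs_mul z w ▸ le_abs_self _
      _ ≤ |z| := mul_le_of_le_one_right (abs_nonneg z) (abs_le.mpr hw)
      _ < 1 := abs_lt.mpr hz
  unfold kernelNumerator
  nlinarith [mul_nonneg (sqrt_nonneg (1 - z ^ 2)) (sqrt_nonneg (1 - w ^ 2))]

lemma continuous_kernelNumerator : Continuous (kernelNumerator z) := by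
  unfold kernelNumerator
  fun_prop

lemma log_kernel_eq (hN : 0 < kernelNumerator z w) (hwz : w ≠ z) :
    log (kernelNumerator z w / |z - w|) = log (kernelNumerator z w) - log (z - w) := by
  rw [log_div hN.ne' (abs_ne_zero.mpr (sub_ne_zero.mpr hwz.symm)), log_abs]

lemma hasDerivAt_sqrt_one_sub_sq (hw : w ∈ Ioo (-1) 1) :
    HasDerivAt (fun w => √(1 - w ^ 2)) (-w / √(1 - w ^ 2)) w := by
  have h : 0 < 1 - w ^ 2 := by nlinarith [hw.1, hw.2]
  convert ((hasDerivAt_pow 2 w).const_sub 1).sqrt h.ne' using 1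
  field_simp
  ring

lemma continuousOn_kernelPrimitive (hz : z ∈ Ioo (-1) 1) :
    ContinuousOn (kernelPrimitive z) (Icc (-1) 1) := by
  have hlogN : ContinuousOn (fun w => log (kernelNumerator z w)) (Icc (-1) 1) :=
    continuous_kernelNumerator.continuousOn.log fun w hw => (kernelNumerator_pos hz hw).ne'
  have hmulLog : Continuous fun w => (z - w) * log (z - w) :=
    continuous_mul_log.comp (continuous_sub_left z)
  exact (((continuous_sub_right z).continuousOn.mul hlogN).add hmulLog.continuousOn).sub
    (continuous_const.mul continuous_arccos).continuousOn

lemma hasDerivAt_kernelPrimitive (hz : z ∈ Ioo (-1) 1) (hw : w ∈ Ioo (-1) 1) (hwz : w ≠ z) :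
    HasDerivAt (kernelPrimitive z) (log (kernelNumerator z w / |z - w|)) w := by
  set s := √(1 - z ^ 2)
  set t := √(1 - w ^ 2)
  set N := kernelNumerator z w
  have hs : s ^ 2 = 1 - z ^ 2 := sq_sqrt (by nlinarith [hz.1, hz.2])
  have ht0 : 0 < t := sqrt_pos.mpr (by nlinarith [hw.1, hw.2])
  have ht : t ^ 2 = 1 - w ^ 2 := sq_sqrt (by nlinarith [hw.1, hw.2])
  have hN : 0 < N := kernelNumerator_pos hz (Ioo_subset_Icc_self hw)
  have hN' : HasDerivAt (kernelNumerator z) (s * (-w / t) - z) w :=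
    (((hasDerivAt_sqrt_one_sub_sq hw).const_mul s).add_const 1).sub
      ((hasDerivAt_id w).const_mul z) |>.congr_deriv (by simp [t])
  have hcancel : (w - z) * ((s * (-w / t) - z) / N) + s / t = 1 := by
    have hNst : N = s * t + 1 - z * w := rfl
    field_simp
    rw [hNst]
    linear_combination -s * ht + t * hs
  have hF := ((((hasDerivAt_id w).sub_const z).mul (hN'.log hN.ne')).add
    ((hasDerivAt_mul_log (sub_ne_zero.mpr hwz.symm)).comp w ((hasDerivAt_id w).const_sub z))).sub
    ((hasDerivAt_arccos hw.1.ne' hw.2.ne).const_mul s)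
  refine hF.congr_deriv ?_
  rw [log_kernel_eq hN hwz]
  simp only [id]
  linear_combination hcancel

lemma kernelPrimitive_one : kernelPrimitive z 1 = 0 := by
  rw [kernelPrimitive, kernelNumerator, ← log_neg_eq_log (z - 1), arccos_one]
  ring_nf

lemma kernelPrimitive_neg_one : kernelPrimitive z (-1) = -(π * √(1 - z ^ 2)) := by
  rw [kernelPrimitive, kernelNumerator, arccos_neg_one]
  ring_nf

lemma intervalIntegrable_log_kernel (hz : z ∈ Ioo (-1) 1) :
    IntervalIntegrable (fun w => log (kernelNumerator z w / |z - w|)) volume (-1) 1 := by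
  have hI : uIcc (-1 : ℝ) 1 = Icc (-1) 1 := uIcc_of_le (by norm_num)
  have hlogN : IntervalIntegrable (fun w => log (kernelNumerator z w)) volume (-1) 1 :=
    (continuous_kernelNumerator.continuousOn.log fun w hw =>
      (kernelNumerator_pos hz (hI ▸ hw)).ne').intervalIntegrable
  have hlogSub : IntervalIntegrable (fun w => log (z - w)) volume (-1) 1 := by
    simpa using (intervalIntegral.intervalIntegrable_log' (a := z + 1) (b := z - 1)).comp_sub_left z
  refine (hlogN.sub hlogSub).congr_ae ?_
  filter_upwards [ae_restrict_of_ae (volume.ae_ne z), ae_restrict_mem measurableSet_uIoc]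
    with w hwz hw
  exact (log_kernel_eq (kernelNumerator_pos hz (hI ▸ uIoc_subset_uIcc hw)) hwz).symm

end

/-- For every `z ∈ (−1,1)`,
`∫_{−1}^{1} log((√(1−z²)√(1−w²) + 1 − zw)/|z−w|) dw = π√(1−z²)`. -/
theorem defNLS_NDR_vacuum_condensate (z : ℝ) (hz : z ∈ Set.Ioo (-1 : ℝ) 1) :
    (∫ w in (-1 : ℝ)..1,
        Real.log ((Real.sqrt (1 - z ^ 2) * Real.sqrt (1 - w ^ 2) + 1 - z * w) / |z - w|))
      = π * Real.sqrt (1 - z ^ 2) := by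
  have hFTC := integral_eq_of_hasDerivAt_off_countable_of_le (kernelPrimitive z)
    (fun w => log (kernelNumerator z w / |z - w|)) (by norm_num) (countable_singleton z)
    (continuousOn_kernelPrimitive hz) (fun w hw => hasDerivAt_kernelPrimitive hz hw.1 hw.2)
    (intervalIntegrable_log_kernel hz)
  rwa [kernelPrimitive_one, kernelPrimitive_neg_one, zero_sub, neg_neg] at hFTC
end
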